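/- There exists an arrangement of the 52 distinct cards of a standard pack (each card being a pair of a suit from a 4-element set and a rank from a 13-element set) into a 4 × 13 rectangular array (4 rows, 13 columns), i.e. a bijection from Fin 4 × Fin 13 (positions) to Fin 4 × Fin 13 (cards), such that: (1) each suit occurs exactly once in each column; (2) each rank occurs exactly once in each row; (3) in each row, some one suit occurs exactly 4 times and each of the other three suits occurs exactly 3 times; and (4) every unordered pair of distinct ranks occurs together in exactly one column. (Such an arrangement is a 4 × 13 double Youden rectangle.) -/
import Mathlib


def dyrSuit : Fin 4 → Fin 13 → Fin 4 :=
  ![![3, 3, 1, 0, 2, 1, 2, 0, 0, 1, 0, 2, 3], ![0, 2, 2, 1, 3, 0, 3, 2, 1, 0, 2, 3, 1], ![1, 1, 3, 3, 0, 2, 0, 3, 2, 2, 3, 1, 0], ![2, 0, 0, 2, 1, 3, 1, 1, 3, 3, 1, 0, 2]]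

def dyrRank : Fin 4 → Fin 13 → Fin 13 :=
  ![![9, 1, 3, 6, 7, 8, 2, 10, 4, 5, 0, 11, 12], ![3, 4, 5, 12, 0, 1, 6, 8, 11, 9, 10, 7, 2], ![0, 10, 2, 4, 5, 6, 7, 3, 9, 12, 11, 1, 8], ![1, 2, 11, 3, 4, 5, 9, 7, 8, 10, 6, 12, 0]]

def dyrFun : Fin 4 × Fin 13 → Fin 4 × Fin 13 := fun p => (dyrSuit p.1 p.2, dyrRank p.1 p.2)

noncomputable def dyrEquiv : Fin 4 × Fin 13 ≃ Fin 4 × Fin 13 := Equiv.ofBijective dyrFun (by decide)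

/-- There exists a 4 × 13 double Youden rectangle: an arrangement (bijection) of the
52 cards of a standard pack, positions `(r, c) : Fin 4 × Fin 13` to cards
`(s, k) : Fin 4 × Fin 13`, such that:
(1) each suit occurs exactly once in each column;
(2) each rank occurs exactly once in each row;
(3) in each row, some one suit occurs exactly 4 times and every other suit exactly 3 times;
(4) every unordered pair of distinct ranks occurs together in exactly one column. -/
theorem exists_double_youden_rectangle_4_13 :
    ∃ f : Fin 4 × Fin 13 ≃ Fin 4 × Fin 13,
      -- (1) each suit occurs exactly once in each column
      (∀ c : Fin 13, ∀ s : Fin 4, ∃! r : Fin 4, (f (r, c)).1 = s) ∧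
      -- (2) each rank occurs exactly once in each row
      (∀ r : Fin 4, ∀ k : Fin 13, ∃! c : Fin 13, (f (r, c)).2 = k) ∧
      -- (3) in each row, one suit occurs 4 times, each other suit 3 times
      (∀ r : Fin 4, ∃ s₀ : Fin 4,
        (Finset.univ.filter (fun c : Fin 13 => (f (r, c)).1 = s₀)).card = 4 ∧
        ∀ s : Fin 4, s ≠ s₀ →
          (Finset.univ.filter (fun c : Fin 13 => (f (r, c)).1 = s)).card = 3) ∧
      -- (4) each pair of distinct ranks occurs together in exactly one column
      (∀ k₁ k₂ : Fin 13, k₁ ≠ k₂ →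
        ∃! c : Fin 13, (∃ r : Fin 4, (f (r, c)).2 = k₁) ∧
                        (∃ r : Fin 4, (f (r, c)).2 = k₂)) := by
  refine ⟨dyrEquiv, ?_, ?_, ?_, ?_⟩
  all_goals try unfold ExistsUnique
  all_goals decide
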